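/- arXiv:2202.06302 — 3 statements merged into one kernel-verified Lean document; each statement's English description precedes it below -/
import Mathlib

section
/- The element Λ # (1/n)·Σ_{i=0}^{n-1} g^i is a left integral of the smash product Hopf algebra H#𝕜G, and the counit of H#𝕜G takes the nonzero value ε(Λ) on it; consequently H#𝕜G is a semisimple Hopf algebra over 𝕜. -/
open TensorProduct DirectSum

noncomputable section

/-- The character of a module `V` over a `k`-algebra `H`: the trace of the action of `h`. -/
def charLin (k H V : Type*) [CommRing k] [Ring H] [Algebra k H]
    [AddCommGroup V] [Module k V] [Module H V] [IsScalarTower k H V] [SMulCommClass H k V] :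
    H →ₗ[k] k :=
  LinearMap.trace k V ∘ₗ (Algebra.lsmul k k V (A := H)).toLinearMap

/-- Convolution product on the dual of a coalgebra. -/
def convP (k A : Type*) [CommRing k] [AddCommGroup A] [Module k A] [Coalgebra k A]
    (f g : A →ₗ[k] k) : A →ₗ[k] k :=
  LinearMap.mul' k k ∘ₗ TensorProduct.map f g ∘ₗ Coalgebra.comul

/-- The element `u = S(Λ₂)Λ₁` associated to an element `Λ` of a Hopf algebra. -/
def uElt (k H : Type*) [CommRing k] [Ring H] [HopfAlgebra k H] (Λ : H) : H :=
  LinearMap.mul' k H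
    ((TensorProduct.map (HopfAlgebra.antipode (R := k)) LinearMap.id)
      ((TensorProduct.comm k H H) (Coalgebra.comul Λ)))

/-- The star product `(f ⋆ g)(h) = (f ⊗ g)(Δ(h)Δ(v')(v ⊗ v))`, where `v'` plays
the role of `v⁻¹`. -/
def starP (k H : Type*) [CommRing k] [Ring H] [HopfAlgebra k H] (v v' : H)
    (f g : H →ₗ[k] k) : H →ₗ[k] k :=
  LinearMap.mul' k k ∘ₗ TensorProduct.map f g ∘ₗ
    (LinearMap.mulRight k ((Coalgebra.comul v') * (v ⊗ₜ[k] v)) ∘ₗ Coalgebra.comul)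

/-- The character of the left regular representation of a finite-dimensional algebra. -/
def regChar (k A : Type*) [CommRing k] [Ring A] [Algebra k A] : A →ₗ[k] k :=
  LinearMap.trace k A ∘ₗ LinearMap.mul k A

/-!
Everything rests on the identity `x t₁ ⊗ S(t₂) = t₁ ⊗ S(t₂) x` for a left integral `t`.

Applying `λ ⊗ id` to it with `t = Λ` gives the Frobenius formula `h = S(λ(hΛ₁)Λ₂)`, so `S` is
surjective and `S²Λ` is again a left integral, with the same counit as `Λ`. A left integral `d`
with `ε(d) = 0` satisfies `d y d = ε(d y) d = 0` for all `y`, hence vanishes in a semisimple ring;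
so `S²Λ = Λ` and `ε(Λ) ≠ 0`. Then `S^{2i}Λ = Λ` makes `Σᵢ Λ # gⁱ` a left integral of `H # 𝕜G`,
and with the normalized integral `t` the average `v ↦ t₁ • π(S(t₂) • v)` of any `𝕜`-linear
projection `π` onto a submodule is `H # 𝕜G`-linear (again by the identity), which is Maschke's
argument for semisimplicity.
-/

open Coalgebra HopfAlgebra LinearMap

theorem eq_zero_of_forall_mul_mul_eq_zero {R : Type*} [Ring R] [IsSemisimpleRing R] {x : R}
    (hx : ∀ y, x * y * x = 0) : x = 0 := by
  obtain ⟨J, hJ⟩ := exists_isCompl (Submodule.span R {x})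
  obtain ⟨_, hy, j, hj, h1⟩ := Submodule.mem_sup.mp (hJ.sup_eq_top ▸ Submodule.mem_top (x := 1))
  obtain ⟨y, rfl⟩ := Submodule.mem_span_singleton.mp hy
  have hxj : x = x * j := by
    simpa [mul_add, ← mul_assoc, hx] using congr(x * $h1).symm
  refine Submodule.disjoint_def.mp hJ.disjoint x (Submodule.mem_span_singleton_self x) ?_
  rw [hxj]
  exact J.smul_mem x hj

def IsLeftIntegral (R : Type*) {A : Type*} [CommSemiring R] [Semiring A] [Bialgebra R A]
    (t : A) : Prop :=
  ∀ a : A, a * t = counit (R := R) a • t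

namespace IsLeftIntegral

section Semiring

variable {R A : Type*} [CommSemiring R] [Semiring A]

lemma smul [Bialgebra R A] {t : A} (ht : IsLeftIntegral R t) (c : R) :
    IsLeftIntegral R (c • t) := fun a ↦ by
  rw [mul_smul_comm, ht a, smul_comm]

variable [HopfAlgebra R A] {t : A}

lemma sum_mul_tmul_antipode_mul_eq_counit_smul {ι κ : Type*} (ht : IsLeftIntegral R t)
    (rt : Repr R t ι) {a : A} (ra : Repr R a κ) (w : A) :
    ∑ j ∈ ra.index, ∑ p ∈ rt.index,
      (ra.left j * rt.left p) ⊗ₜ[R] (antipode R (rt.right p) * (antipode R (ra.right j) * w))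
      = counit (R := R) a • ∑ p ∈ rt.index, rt.left p ⊗ₜ[R] (antipode R (rt.right p) * w) := by
  have := congr(TensorProduct.map .id (mulRight R w ∘ₗ antipode R) $((ra.mul rt).eq))
  simp only [ht a, map_smul, ← rt.eq, map_sum, TensorProduct.map_tmul] at this
  simpa [Finset.sum_product, antipode_mul_antidistrib, mul_assoc] using this

theorem sum_mul_tmul_antipode_eq_sum_tmul_antipode_mul {ι : Type*} (ht : IsLeftIntegral R t)
    (rt : Repr R t ι) (x : A) :
    ∑ p ∈ rt.index, (x * rt.left p) ⊗ₜ[R] antipode R (rt.right p)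
      = ∑ p ∈ rt.index, rt.left p ⊗ₜ[R] (antipode R (rt.right p) * x) := by
  let Θ : A ⊗[R] (A ⊗[R] A) →ₗ[R] A ⊗[R] A := ∑ p ∈ rt.index,
    TensorProduct.map (mulRight R (rt.left p))
      (mulLeft R (antipode R (rt.right p)) ∘ₗ mul' R A ∘ₗ TensorProduct.map (antipode R) .id)
  have hΘ (u v w : A) : Θ (u ⊗ₜ (v ⊗ₜ w)) = ∑ p ∈ rt.index,
      (u * rt.left p) ⊗ₜ[R] (antipode R (rt.right p) * (antipode R v * w)) := by
    simp [Θ]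
  let rx := ℛ R x
  have hx : ∑ i ∈ rx.index, counit (R := R) (rx.right i) • rx.left i = x := by
    simpa only [map_sum, TensorProduct.rid_tmul, one_smul] using
      congr(TensorProduct.rid R A $(sum_tmul_counit_eq rx))
  -- `Θ(x₁₁ ⊗ x₁₂ ⊗ x₂)` collapses by the integral property, `Θ(x₁ ⊗ x₂₁ ⊗ x₂₂)` by the antipode
  have hcoassoc :=
    congr(Θ $(sum_tmul_tmul_eq rx (fun i ↦ ℛ R (rx.left i)) (fun i ↦ ℛ R (rx.right i))))
  simp only [map_sum, hΘ] at hcoassoc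
  rw [Finset.sum_congr rfl fun i _ ↦
      ht.sum_mul_tmul_antipode_mul_eq_counit_smul rt (ℛ R (rx.left i)) _,
    Finset.sum_congr rfl fun i _ ↦ Finset.sum_comm] at hcoassoc
  simp only [← TensorProduct.tmul_sum, ← Finset.mul_sum, sum_antipode_mul_eq_smul] at hcoassoc
  conv_lhs => rw [← hx]
  conv_rhs => rw [← sum_counit_smul rx]
  simp only [Finset.mul_sum, Finset.sum_mul, TensorProduct.tmul_sum, TensorProduct.sum_tmul,
    mul_smul_comm, smul_mul_assoc, mul_one, TensorProduct.tmul_smul, ← TensorProduct.smul_tmul',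
    Finset.smul_sum] at hcoassoc ⊢
  rw [Finset.sum_comm, ← hcoassoc, Finset.sum_comm]

theorem antipode_surjective (ht : IsLeftIntegral R t) (lam : A →ₗ[R] R)
    (hlam : ∀ h : A, TensorProduct.lid R A (TensorProduct.map lam .id (comul h)) = lam h • 1)
    (hlamt : lam t = 1) : Function.Surjective (antipode R (A := A)) := by
  intro h
  let rt := ℛ R t
  refine ⟨∑ p ∈ rt.index, lam (h * rt.left p) • rt.right p, ?_⟩
  have key := congr(TensorProduct.lid R A (TensorProduct.map lam .id
    $(ht.sum_mul_tmul_antipode_eq_sum_tmul_antipode_mul rt h)))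
  have hlamt' := congr(antipode R $(hlam t))
  rw [hlamt, one_smul, antipode_one, ← rt.eq] at hlamt'
  simp only [map_sum, TensorProduct.map_tmul, TensorProduct.lid_tmul, id_coe, id_eq,
    ← smul_mul_assoc, ← Finset.sum_mul, map_smul] at key hlamt' ⊢
  rw [key, hlamt', one_mul]

theorem antipode_antipode (ht : IsLeftIntegral R t)
    (hS : Function.Surjective (antipode R (A := A))) :
    IsLeftIntegral R (antipode R (antipode R t)) := by
  intro h
  obtain ⟨a, rfl⟩ := hS.comp hS h
  simp only [Function.comp_apply, ← antipode_mul_antidistrib, ht a, map_smul, counit_antipode]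

end Semiring

section Ring

variable {R A : Type*} [CommRing R] [Ring A]

lemma sub [Bialgebra R A] {t t' : A} (ht : IsLeftIntegral R t) (ht' : IsLeftIntegral R t') :
    IsLeftIntegral R (t - t') := fun a ↦ by
  rw [mul_sub, ht a, ht' a, smul_sub]

lemma eq_zero_of_counit_eq_zero [Bialgebra R A] [IsSemisimpleRing A] {t : A}
    (ht : IsLeftIntegral R t) (h0 : counit (R := R) t = 0) : t = 0 :=
  eq_zero_of_forall_mul_mul_eq_zero fun y ↦ by
    rw [ht, Bialgebra.counit_mul, h0, zero_mul, zero_smul]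

lemma counit_ne_zero [Bialgebra R A] [IsSemisimpleRing A] {t : A}
    (ht : IsLeftIntegral R t) (h0 : t ≠ 0) : counit (R := R) t ≠ 0 :=
  fun h ↦ h0 (ht.eq_zero_of_counit_eq_zero h)

theorem antipode_antipode_eq [HopfAlgebra R A] [IsSemisimpleRing A] {t : A}
    (ht : IsLeftIntegral R t) (hS : Function.Surjective (antipode R (A := A))) :
    antipode R (antipode R t) = t :=
  sub_eq_zero.mp <| ((ht.antipode_antipode hS).sub ht).eq_zero_of_counit_eq_zero <| by
    simp

end Ring

section Field

variable {k A V : Type*} [Field k] [Ring A] [HopfAlgebra k A]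
  [AddCommGroup V] [Module k V] [Module A V] [IsScalarTower k A V]

theorem isSemisimpleModule {t : A} (ht : IsLeftIntegral k t)
    (ht1 : counit (R := k) t = 1) : IsSemisimpleModule A V where
  exists_isCompl W := by
    obtain ⟨π, hπ⟩ := ((W.subtype).restrictScalars k).exists_leftInverse_of_injective
      (by simp)
    let rt := ℛ k t
    let B (v : V) : A →ₗ[k] A →ₗ[k] W := LinearMap.mk₂ k (fun a b ↦ a • π (b • v))
      (by simp [add_smul]) (by simp [smul_assoc]) (by simp [add_smul])
      (fun c m n ↦ by rw [smul_assoc, map_smul, smul_algebra_smul_comm])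
    let P : V →ₗ[A] W :=
      { toFun v := ∑ p ∈ rt.index, rt.left p • π (antipode k (rt.right p) • v)
        map_add' v w := by simp [smul_add, Finset.sum_add_distrib]
        map_smul' x v := by
          have := congr(TensorProduct.lift (B v)
            $(ht.sum_mul_tmul_antipode_eq_sum_tmul_antipode_mul rt x))
          simp only [map_sum, TensorProduct.lift.tmul, B, mk₂_apply, mul_smul] at this
          simp only [RingHom.id_apply, Finset.smul_sum, ← this] }
    refine ⟨LinearMap.ker P, LinearMap.isCompl_of_proj fun w ↦ ?_⟩
    have hπW (u : W) : π u = u := congr($hπ u)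
    change ∑ p ∈ rt.index, rt.left p • π ((antipode k (rt.right p) • w : W) : V) = w
    simp only [hπW, ← mul_smul, ← Finset.sum_smul, sum_mul_antipode_eq_smul, ht1, one_smul]

end Field

end IsLeftIntegral

section SmashProduct

variable {k H A : Type*} [CommSemiring k] [Semiring H] [HopfAlgebra k H] [Semiring A]
  [Bialgebra k A] {n : ℕ} [NeZero n] {σ : ZMod n → H →ₗ[k] A}

-- `σ κ h` stands for `h # g^κ` in the smash product `H # 𝕜(ℤ/n)`.
theorem isLeftIntegral_sum_apply
    (hσmul : ∀ (κ ι : ZMod n) (a b : H),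
      σ κ a * σ ι b = σ (κ + ι) (a * (antipode k (A := H))^[2 * κ.val] b))
    (hσcounit : ∀ (κ : ZMod n) (h : H), counit (R := k) (σ κ h) = counit (R := k) h)
    (hσspan : ∀ a : A, ∃ c : ZMod n → H, a = ∑ κ, σ κ (c κ))
    {Λ : H} (hΛ : IsLeftIntegral k Λ) (hSS : antipode k (antipode k Λ) = Λ) :
    IsLeftIntegral k (∑ ι, σ ι Λ) := by
  have hfix (m : ℕ) : (antipode k (A := H))^[2 * m] Λ = Λ := by
    rw [Function.iterate_mul]
    exact Function.iterate_fixed hSS m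
  intro a
  obtain ⟨c, rfl⟩ := hσspan a
  have hrow (κ : ZMod n) : σ κ (c κ) * ∑ ι, σ ι Λ = counit (R := k) (c κ) • ∑ ι, σ ι Λ := by
    simp only [Finset.mul_sum, hσmul, hfix, hΛ (c κ), map_smul, Finset.smul_sum]
    exact Fintype.sum_equiv (Equiv.addLeft κ) _ _ fun _ ↦ rfl
  simp only [Finset.sum_mul, hrow, map_sum, hσcounit, Finset.sum_smul]

end SmashProduct

theorem stmt3_general
    {k : Type*} [Field k] {p : ℕ} [CharP k p]
    {H : Type*} [Ring H] [HopfAlgebra k H] [IsSemisimpleRing H]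
    (hpnd : ¬ p ∣ 2 * Module.finrank k H)
    (Λ : H) (hΛ : ∀ h : H, h * Λ = Coalgebra.counit (R := k) h • Λ)
    (lam : H →ₗ[k] k)
    (hlamInt : ∀ h : H, (TensorProduct.lid k H)
      ((TensorProduct.map lam LinearMap.id) (Coalgebra.comul (R := k) h)) = lam h • (1 : H))
    (hlamΛ : lam Λ = 1)
    (n : ℕ) [NeZero n] (hn : n = 2 * Module.finrank k H)
    {A : Type*} [Ring A] [HopfAlgebra k A]
    (σ : ZMod n → H →ₗ[k] A)
    (hσmul : ∀ (κ ι : ZMod n) (a b : H), σ κ a * σ ι b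
      = σ (κ + ι) (a * (⇑(HopfAlgebra.antipode (R := k) (A := H)))^[2 * κ.val] b))
    (hσcounit : ∀ (κ : ZMod n) (h : H),
      Coalgebra.counit (R := k) (σ κ h) = Coalgebra.counit (R := k) h)
    (hσspan : ∀ a : A, ∃ c : ZMod n → H, a = ∑ κ : ZMod n, σ κ (c κ))
    :
    (∀ a : A, a * ((n : k)⁻¹ • ∑ κ : ZMod n, σ κ Λ)
      = Coalgebra.counit (R := k) a • ((n : k)⁻¹ • ∑ κ : ZMod n, σ κ Λ)) ∧
    Coalgebra.counit (R := k) ((n : k)⁻¹ • ∑ κ : ZMod n, σ κ Λ) = Coalgebra.counit (R := k) Λ ∧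
    Coalgebra.counit (R := k) Λ ≠ 0 ∧
    IsSemisimpleRing A := by
  have hS := IsLeftIntegral.antipode_surjective hΛ lam hlamInt hlamΛ
  have hSS : antipode k (antipode k Λ) = Λ := IsLeftIntegral.antipode_antipode_eq hΛ hS
  have hT : IsLeftIntegral k ((n : k)⁻¹ • ∑ κ, σ κ Λ) :=
    (isLeftIntegral_sum_apply hσmul hσcounit hσspan hΛ hSS).smul _
  have hn0 : (n : k) ≠ 0 := by
    rwa [ne_eq, CharP.cast_eq_zero_iff k p, hn]
  have hεT : counit (R := k) ((n : k)⁻¹ • ∑ κ, σ κ Λ) = counit (R := k) Λ := by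
    simp [map_sum, hσcounit, inv_mul_cancel_left₀ hn0]
  have hεΛ : counit (R := k) Λ ≠ 0 :=
    IsLeftIntegral.counit_ne_zero hΛ fun h0 ↦ by simp [h0] at hlamΛ
  refine ⟨hT, hεT, hεΛ, ?_⟩
  exact (hT.smul (counit (R := k) Λ)⁻¹).isSemisimpleModule <| by
    rw [map_smul, hεT, smul_eq_mul, inv_mul_cancel₀ hεΛ]

theorem stmt3
    {k : Type*} [Field k] [IsAlgClosed k] {p : ℕ} [CharP k p] (hp : 0 < p)
    {H : Type*} [Ring H] [HopfAlgebra k H] [FiniteDimensional k H] [IsSemisimpleRing H]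
    (hpdim : Module.finrank k H < p ^ 2) (hpnd : ¬ p ∣ 2 * Module.finrank k H)
    (Λ : H) (hΛ : ∀ h : H, h * Λ = Coalgebra.counit (R := k) h • Λ)
    (lam : H →ₗ[k] k)
    (hlamInt : ∀ h : H, (TensorProduct.lid k H)
      ((TensorProduct.map lam LinearMap.id) (Coalgebra.comul (R := k) h)) = lam h • (1 : H))
    (hlamΛ : lam Λ = 1)
    (u : H) (hu : u = uElt k H Λ)
    (n : ℕ) [NeZero n] (hn : n = 2 * Module.finrank k H)
    {A : Type*} [Ring A] [HopfAlgebra k A]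
    (σ : ZMod n → H →ₗ[k] A)
    (hσone : σ 0 1 = 1)
    (hσmul : ∀ (κ ι : ZMod n) (a b : H), σ κ a * σ ι b
      = σ (κ + ι) (a * (⇑(HopfAlgebra.antipode (R := k) (A := H)))^[2 * κ.val] b))
    (hσcomul : ∀ (κ : ZMod n) (h : H),
      Coalgebra.comul (R := k) (σ κ h) = TensorProduct.map (σ κ) (σ κ) (Coalgebra.comul (R := k) h))
    (hσcounit : ∀ (κ : ZMod n) (h : H),
      Coalgebra.counit (R := k) (σ κ h) = Coalgebra.counit (R := k) h)
    (hσantipode : ∀ (κ : ZMod n) (h : H), HopfAlgebra.antipode (R := k) (σ κ h)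
      = σ (-κ) ((⇑(HopfAlgebra.antipode (R := k) (A := H)))^[2 * n + 1 - 2 * κ.val] h))
    (hσspan : ∀ a : A, ∃ c : ZMod n → H, a = ∑ κ : ZMod n, σ κ (c κ))
    (hσindep : ∀ c : ZMod n → H, ∑ κ : ZMod n, σ κ (c κ) = 0 → ∀ κ, c κ = 0)
    :
    (∀ a : A, a * ((n : k)⁻¹ • ∑ κ : ZMod n, σ κ Λ)
      = Coalgebra.counit (R := k) a • ((n : k)⁻¹ • ∑ κ : ZMod n, σ κ Λ)) ∧
    Coalgebra.counit (R := k) ((n : k)⁻¹ • ∑ κ : ZMod n, σ κ Λ) = Coalgebra.counit (R := k) Λ ∧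
    Coalgebra.counit (R := k) Λ ≠ 0 ∧
    IsSemisimpleRing A :=
  stmt3_general hpnd Λ hΛ lam hlamInt hlamΛ n hn σ hσmul hσcounit hσspan

end
end

section
/- If V is a simple H-module and W is a simple 𝕜G-module, then V ⊗ W, with the H#𝕜G-module structure (h#g^k)·(x ⊗ w) = (h v^k · x) ⊗ (g^k · w), is a simple H#𝕜G-module. -/
open TensorProduct DirectSum

noncomputable section

/-!
Through `σ 0` the algebra `H` acts on `M ⊗ W` on the left factor only (`σ 0 1 = 1` forces
`ρ 0 = id`). By Schur's lemma every `H`-linear map `M → M ⊗ W` is `x ↦ x ⊗ w`, so, `M ⊗ W` being a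
semisimple `H`-module, a nonzero submodule `U` contains `M ⊗ w` for some `w ≠ 0`. The `w` with
`M ⊗ w ⊆ U` form a subspace of `W`, and it is `ρ κ`-stable: `σ κ 1` sends `x ⊗ w` to
`v ^ κ • x ⊗ ρ κ w`, `v ^ κ` does not kill `M` since `σ κ 1` is a unit, and one nonzero `y` with
`y ⊗ w' ∈ U` gives `M ⊗ w' ⊆ U` because `M` is simple. As `W` is simple, it is all of `W`.
-/

section TensorWithSimple

variable {k M W : Type*} [Field k] [AddCommGroup M] [Module k M] [AddCommGroup W] [Module k W]

theorem TensorProduct.tmul_eq_zero_iff_of_field {x : M} {w : W} :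
    x ⊗ₜ[k] w = 0 ↔ x = 0 ∨ w = 0 := by
  refine ⟨fun h => or_iff_not_imp_left.mpr fun hx => ?_, ?_⟩
  · obtain ⟨φ, hφ⟩ : ∃ φ : Module.Dual k M, φ x ≠ 0 := by
      simpa using mt (Module.forall_dual_apply_eq_zero_iff k x).mp hx
    simpa [hφ] using congr(TensorProduct.lid k W (φ.rTensor W $h))
  · rintro (rfl | rfl) <;> simp

variable (M) in
def AddSubgroup.rightTensorFactor (U : AddSubgroup (M ⊗[k] W)) : Submodule k W where
  carrier := {w | ∀ x : M, x ⊗ₜ[k] w ∈ U}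
  add_mem' ha hb x := by
    rw [tmul_add]
    exact U.add_mem (ha x) (hb x)
  zero_mem' x := by
    rw [tmul_zero]
    exact U.zero_mem
  smul_mem' c w hw x := by
    rw [← smul_tmul]
    exact hw (c • x)

theorem AddSubgroup.eq_top_of_rightTensorFactor_eq_top {U : AddSubgroup (M ⊗[k] W)}
    (hU : U.rightTensorFactor M = ⊤) : U = ⊤ := by
  refine (AddSubgroup.eq_top_iff' U).mpr fun t => ?_
  induction t using TensorProduct.induction_on with
  | zero => exact U.zero_mem
  | tmul x w => exact (hU ▸ Submodule.mem_top : w ∈ U.rightTensorFactor M) x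
  | add t₁ t₂ h₁ h₂ => exact U.add_mem h₁ h₂

theorem tmul_mem_of_tmul_mem {H : Type*} [Ring H] [Module H M] [SMulCommClass k H M]
    [IsSimpleModule H M] {N : Submodule H (M ⊗[k] W)} {x : M} (hx : x ≠ 0) {w : W}
    (hxw : x ⊗ₜ[k] w ∈ N) (y : M) : y ⊗ₜ[k] w ∈ N := by
  obtain ⟨h, rfl⟩ := Submodule.mem_span_singleton.mp
    (IsSimpleModule.span_singleton_eq_top H hx ▸ Submodule.mem_top : y ∈ H ∙ x)
  simpa only [smul_tmul'] using N.smul_mem h hxw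

variable {H : Type*} [Ring H] [Algebra k H] [Module H M] [IsScalarTower k H M]

variable (H) in
def evalRight (φ : Module.Dual k W) : M ⊗[k] W →ₗ[H] M :=
  (AlgebraTensorModule.rid k H M).toLinearMap ∘ₗ AlgebraTensorModule.lTensor H M φ

@[simp]
theorem evalRight_tmul (φ : Module.Dual k W) (x : M) (w : W) :
    evalRight H φ (x ⊗ₜ w) = φ w • x := rfl

theorem sum_evalRight_coord_tmul {ι : Type*} [Fintype ι] (b : Module.Basis ι k W)
    (t : M ⊗[k] W) : ∑ i, evalRight H (b.coord i) t ⊗ₜ b i = t := by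
  induction t using TensorProduct.induction_on with
  | zero => simp
  | tmul x w =>
    simp_rw [evalRight_tmul, smul_tmul, ← tmul_sum, Module.Basis.coord_apply,
      Module.Basis.sum_repr]
  | add t₁ t₂ h₁ h₂ => simp only [map_add, add_tmul, Finset.sum_add_distrib, h₁, h₂]

variable (k) in
theorem IsSimpleModule.exists_eq_smul [IsAlgClosed k] [FiniteDimensional k M]
    [IsSimpleModule H M] (f : M →ₗ[H] M) : ∃ c : k, ∀ x, f x = c • x := by
  have : Nontrivial M := IsSimpleModule.nontrivial H M
  obtain ⟨c, hc⟩ := Module.End.exists_eigenvalue (f.restrictScalars k)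
  obtain ⟨x, hx⟩ := hc.exists_hasEigenvector
  have hker : (f - c • LinearMap.id : M →ₗ[H] M) x = 0 := by
    simpa [sub_eq_zero] using hx.apply_eq_smul
  have hzero := (f - c • LinearMap.id : M →ₗ[H] M).injective_or_eq_zero.resolve_left
    fun hinj => hx.2 (hinj (hker.trans (map_zero _).symm))
  exact ⟨c, fun y => sub_eq_zero.mp (LinearMap.congr_fun hzero y)⟩

theorem exists_eq_tmul_of_linearMap [IsAlgClosed k] [FiniteDimensional k M]
    [FiniteDimensional k W] [IsSimpleModule H M] (F : M →ₗ[H] M ⊗[k] W) :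
    ∃ w : W, ∀ x, F x = x ⊗ₜ[k] w := by
  let b := Module.finBasis k W
  choose c hc using fun i => IsSimpleModule.exists_eq_smul k (evalRight H (b.coord i) ∘ₗ F)
  refine ⟨∑ i, c i • b i, fun x => ?_⟩
  rw [← sum_evalRight_coord_tmul (H := H) b (F x), tmul_sum]
  exact Finset.sum_congr rfl fun i _ => by rw [← LinearMap.comp_apply, hc, smul_tmul]

theorem exists_tmul_mem_of_ne_bot [IsAlgClosed k] [FiniteDimensional k M]
    [FiniteDimensional k W] [IsSimpleModule H M] [IsSemisimpleModule H (M ⊗[k] W)]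
    {N : Submodule H (M ⊗[k] W)} (hN : N ≠ ⊥) : ∃ w ≠ 0, ∀ x : M, x ⊗ₜ[k] w ∈ N := by
  obtain ⟨S, hSN, hS⟩ := (IsSemisimpleModule.eq_bot_or_exists_simple_le N).resolve_left hN
  have : Nontrivial S := IsSimpleModule.nontrivial H S
  obtain ⟨s, hs⟩ := exists_ne (0 : S)
  let b := Module.finBasis k W
  obtain ⟨i, hi⟩ : ∃ i, evalRight H (b.coord i) (s : M ⊗[k] W) ≠ 0 := by
    by_contra! h
    refine hs (Subtype.ext ?_)
    rw [← sum_evalRight_coord_tmul (H := H) b (s : M ⊗[k] W)]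
    simp [h]
  let g : S →ₗ[H] M := evalRight H (b.coord i) ∘ₗ S.subtype
  have hg : g ≠ 0 := fun h => hi (LinearMap.congr_fun h s)
  let F : M →ₗ[H] M ⊗[k] W :=
    S.subtype ∘ₗ (LinearEquiv.ofBijective g (LinearMap.bijective_of_ne_zero hg)).symm.toLinearMap
  obtain ⟨w, hw⟩ := exists_eq_tmul_of_linearMap F
  refine ⟨w, fun hw0 => hs (Subtype.ext ?_), fun y => hw y ▸ hSN (Submodule.coe_mem _)⟩
  have hFg : F (g s) = s := by simp [F]
  rw [← hFg, hw, hw0, tmul_zero, ZeroMemClass.coe_zero]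

theorem isSimpleModule_tensorProduct {ι A : Type*} [Ring A] [Module A (M ⊗[k] W)]
    [IsAlgClosed k] [FiniteDimensional k M] [FiniteDimensional k W] [IsSimpleModule H M]
    [IsSemisimpleModule H (M ⊗[k] W)] [Nontrivial W] (ρ : ι → W →ₗ[k] W)
    (hW : ∀ W' : Submodule k W, (∀ i, ∀ w ∈ W', ρ i w ∈ W') → W' = ⊥ ∨ W' = ⊤)
    (hH : ∀ h : H, ∃ a : A, ∀ t : M ⊗[k] W, a • t = h • t)
    (hρ : ∀ i, ∃ (a : A) (L : M → M), (∃ x, L x ≠ 0) ∧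
      ∀ x w, a • (x ⊗ₜ[k] w) = L x ⊗ₜ[k] ρ i w) :
    IsSimpleModule A (M ⊗[k] W) := by
  have : Nontrivial M := IsSimpleModule.nontrivial H M
  have : Nontrivial (M ⊗[k] W) := by
    obtain ⟨x, hx⟩ := exists_ne (0 : M)
    obtain ⟨w, hw⟩ := exists_ne (0 : W)
    exact ⟨x ⊗ₜ w, 0, by simp [tmul_eq_zero_iff_of_field, hx, hw]⟩
  refine { eq_bot_or_eq_top := fun U => or_iff_not_imp_left.mpr fun hU => ?_ }
  let UH : Submodule H (M ⊗[k] W) :=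
    { U.toAddSubgroup with
      smul_mem' := fun h t ht => by
        obtain ⟨a, ha⟩ := hH h
        exact ha t ▸ U.smul_mem a ht }
  have hUH : UH ≠ ⊥ := fun h => hU <| (Submodule.eq_bot_iff U).mpr fun t ht =>
    (Submodule.mem_bot H).mp (h ▸ ht : t ∈ (⊥ : Submodule H _))
  obtain ⟨w₀, hw₀, hw₀U⟩ : ∃ w ≠ 0, w ∈ U.toAddSubgroup.rightTensorFactor M :=
    exists_tmul_mem_of_ne_bot hUH
  have hstable : ∀ i, ∀ w ∈ U.toAddSubgroup.rightTensorFactor M,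
      ρ i w ∈ U.toAddSubgroup.rightTensorFactor M := by
    intro i w hw
    obtain ⟨a, L, ⟨x, hx⟩, ha⟩ := hρ i
    exact tmul_mem_of_tmul_mem (H := H) (N := UH) hx (ha x w ▸ U.smul_mem a (hw x))
  have htop := (hW _ hstable).resolve_left fun h => hw₀ ((Submodule.mem_bot k).mp (h ▸ hw₀U))
  exact Submodule.toAddSubgroup_eq_top.mp (AddSubgroup.eq_top_of_rightTensorFactor_eq_top htop)

end TensorWithSimple

theorem stmt5_general
    {k : Type*} [Field k] [IsAlgClosed k]
    {H : Type*} [Ring H] [HopfAlgebra k H] [IsSemisimpleRing H]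
    (v : H)
    (n : ℕ)
    {A : Type*} [Ring A] [HopfAlgebra k A]
    (σ : ZMod n → H →ₗ[k] A)
    (hσone : σ 0 1 = 1)
    (hσmul : ∀ (κ ι : ZMod n) (a b : H), σ κ a * σ ι b
      = σ (κ + ι) (a * (⇑(HopfAlgebra.antipode (R := k) (A := H)))^[2 * κ.val] b))
    (M : Type*) [AddCommGroup M] [Module k M] [Module H M] [IsScalarTower k H M]
    [FiniteDimensional k M]
    (hMsimple : IsSimpleModule H M)
    (W : Type*) [AddCommGroup W] [Module k W] [FiniteDimensional k W]
    (ρ : Representation k (ZMod n) W)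
    (hWnontriv : Nontrivial W)
    (hWsimple : ∀ U : Submodule k W, (∀ (κ : ZMod n), ∀ w ∈ U, ρ κ w ∈ U) → U = ⊥ ∨ U = ⊤)
    [instMW : Module A (M ⊗[k] W)]
    (hact : ∀ (h : H) (κ : ZMod n) (x : M) (w : W),
      σ κ h • (x ⊗ₜ[k] w) = ((h * v ^ κ.val) • x) ⊗ₜ[k] (ρ κ w))
    :
    IsSimpleModule A (M ⊗[k] W) := by
  have := hMsimple
  have : Nontrivial M := IsSimpleModule.nontrivial H M
  have : IsSemisimpleModule H (M ⊗[k] W) := IsSemisimpleRing.isSemisimpleModule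
  obtain ⟨x₀, hx₀⟩ := exists_ne (0 : M)
  obtain ⟨w₀, hw₀⟩ := exists_ne (0 : W)
  have hρ₀ : ∀ w, ρ 0 w = w := fun w => by
    have h := hact 1 0 x₀ w
    rw [hσone, one_smul, ZMod.val_zero, pow_zero, one_mul, one_smul] at h
    have h0 : x₀ ⊗ₜ[k] (ρ 0 w - w) = 0 := by rw [tmul_sub, ← h, sub_self]
    exact sub_eq_zero.mp ((tmul_eq_zero_iff_of_field.mp h0).resolve_left hx₀)
  have hσ₀ : ∀ (h : H) (t : M ⊗[k] W), σ 0 h • t = h • t := fun h t => by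
    induction t using TensorProduct.induction_on with
    | zero => simp only [smul_zero]
    | tmul x w => rw [hact, ZMod.val_zero, pow_zero, mul_one, hρ₀, smul_tmul']
    | add t₁ t₂ h₁ h₂ => rw [smul_add, smul_add, h₁, h₂]
  have hσinv : ∀ κ (t : M ⊗[k] W), σ (-κ) 1 • σ κ 1 • t = t := fun κ t => by
    rw [← mul_smul, hσmul, Function.iterate_fixed HopfAlgebra.antipode_one, mul_one,
      neg_add_cancel, hσone, one_smul]
  refine isSimpleModule_tensorProduct (H := H) (fun κ => ρ κ) hWsimple (fun h => ⟨σ 0 h, hσ₀ h⟩)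
    fun κ => ⟨σ κ 1, (v ^ κ.val • ·), ?_, fun x w => by rw [hact, one_mul]⟩
  by_contra! hv
  refine ((tmul_eq_zero_iff_of_field (k := k)).not.mpr (not_or.mpr ⟨hx₀, hw₀⟩)) ?_
  rw [← hσinv κ (x₀ ⊗ₜ[k] w₀), hact, one_mul, hv, zero_tmul, smul_zero]

theorem stmt5
    {k : Type*} [Field k] [IsAlgClosed k] {p : ℕ} [CharP k p] (hp : 0 < p)
    {H : Type*} [Ring H] [HopfAlgebra k H] [FiniteDimensional k H] [IsSemisimpleRing H]
    (hpdim : Module.finrank k H < p ^ 2) (hpnd : ¬ p ∣ 2 * Module.finrank k H)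
    (Λ : H) (hΛ : ∀ h : H, h * Λ = Coalgebra.counit (R := k) h • Λ)
    (lam : H →ₗ[k] k)
    (hlamInt : ∀ h : H, (TensorProduct.lid k H)
      ((TensorProduct.map lam LinearMap.id) (Coalgebra.comul (R := k) h)) = lam h • (1 : H))
    (hlamΛ : lam Λ = 1)
    (u : H) (hu : u = uElt k H Λ)
    {m : ℕ} (V : Fin m → Type*) [∀ i, AddCommGroup (V i)] [∀ i, Module k (V i)]
    [∀ i, Module H (V i)] [∀ i, IsScalarTower k H (V i)] [∀ i, SMulCommClass H k (V i)]
    [∀ i, FiniteDimensional k (V i)]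
    (hVsimple : ∀ i, IsSimpleModule H (V i))
    (hVdistinct : ∀ i j : Fin m, i ≠ j → IsEmpty (V i ≃ₗ[H] V j))
    (hVcomplete : ∀ (N : Type*) [AddCommGroup N] [Module H N],
      IsSimpleModule H N → ∃ i, Nonempty (N ≃ₗ[H] V i))
    (e : Fin m → H) (heOne : ∀ i (x : V i), e i • x = x)
    (heZero : ∀ i j, i ≠ j → ∀ x : V j, e i • x = 0)
    (sε : k) (hsε : sε ^ 2 = Coalgebra.counit (R := k) Λ)
    (slam : Fin m → k) (hslam : ∀ i, slam i ^ 2 = lam (e i))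
    (v : H) (hv : v = sε⁻¹ • (u * ∑ i, (slam i / (Module.finrank k (V i) : k)) • e i))
    (n : ℕ) [NeZero n] (hn : n = 2 * Module.finrank k H)
    {A : Type*} [Ring A] [HopfAlgebra k A]
    (σ : ZMod n → H →ₗ[k] A)
    (hσone : σ 0 1 = 1)
    (hσmul : ∀ (κ ι : ZMod n) (a b : H), σ κ a * σ ι b
      = σ (κ + ι) (a * (⇑(HopfAlgebra.antipode (R := k) (A := H)))^[2 * κ.val] b))
    (hσcomul : ∀ (κ : ZMod n) (h : H),
      Coalgebra.comul (R := k) (σ κ h) = TensorProduct.map (σ κ) (σ κ) (Coalgebra.comul (R := k) h))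
    (hσcounit : ∀ (κ : ZMod n) (h : H),
      Coalgebra.counit (R := k) (σ κ h) = Coalgebra.counit (R := k) h)
    (hσantipode : ∀ (κ : ZMod n) (h : H), HopfAlgebra.antipode (R := k) (σ κ h)
      = σ (-κ) ((⇑(HopfAlgebra.antipode (R := k) (A := H)))^[2 * n + 1 - 2 * κ.val] h))
    (hσspan : ∀ a : A, ∃ c : ZMod n → H, a = ∑ κ : ZMod n, σ κ (c κ))
    (hσindep : ∀ c : ZMod n → H, ∑ κ : ZMod n, σ κ (c κ) = 0 → ∀ κ, c κ = 0)
    (M : Type*) [AddCommGroup M] [Module k M] [Module H M] [IsScalarTower k H M]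
    [SMulCommClass H k M] [FiniteDimensional k M]
    (hMsimple : IsSimpleModule H M)
    (W : Type*) [AddCommGroup W] [Module k W] [FiniteDimensional k W]
    (ρ : Representation k (ZMod n) W)
    (hWnontriv : Nontrivial W)
    (hWsimple : ∀ U : Submodule k W, (∀ (κ : ZMod n), ∀ w ∈ U, ρ κ w ∈ U) → U = ⊥ ∨ U = ⊤)
    [instMW : Module A (M ⊗[k] W)]
    (hact : ∀ (h : H) (κ : ZMod n) (x : M) (w : W),
      σ κ h • (x ⊗ₜ[k] w) = ((h * v ^ κ.val) • x) ⊗ₜ[k] (ρ κ w))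
    :
    IsSimpleModule A (M ⊗[k] W) :=
  stmt5_general v n σ hσone hσmul M hMsimple W ρ hWnontriv hWsimple (instMW := instMW) hact

end
end

section
/- Let Λ' := Λ # (1/n)·Σ_{i=0}^{n-1} g^i (a left integral of H#𝕜G) and λ' := λ # Σ_{j=0}^{n-1} ψ^j (a right integral of (H#𝕜G)*). Then λ'(Λ') = 1, the element u' := S_{H#𝕜G}(Λ'₍₂₎)·Λ'₍₁₎ of H#𝕜G equals u # 1_{𝕜G}, and the character of the left regular representation of H#𝕜G equals χ_H # Σ_{j=0}^{n-1} ψ^j; in particular χ_{H#𝕜G}(h # g^k) = n·χ_H(h) if k = 0 and χ_{H#𝕜G}(h # g^k) = 0 for 1 ≤ k ≤ n-1. -/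
open TensorProduct DirectSum

noncomputable section

set_option maxHeartbeats 2000000 in
theorem stmt7
    {k : Type*} [Field k] [IsAlgClosed k] {p : ℕ} [CharP k p] (hp : 0 < p)
    {H : Type*} [Ring H] [HopfAlgebra k H] [FiniteDimensional k H] [IsSemisimpleRing H]
    (hpdim : Module.finrank k H < p ^ 2) (hpnd : ¬ p ∣ 2 * Module.finrank k H)
    (Λ : H) (hΛ : ∀ h : H, h * Λ = Coalgebra.counit (R := k) h • Λ)
    (lam : H →ₗ[k] k)
    (hlamInt : ∀ h : H, (TensorProduct.lid k H)
      ((TensorProduct.map lam LinearMap.id) (Coalgebra.comul (R := k) h)) = lam h • (1 : H))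
    (hlamΛ : lam Λ = 1)
    (u : H) (hu : u = uElt k H Λ)
    (n : ℕ) [NeZero n] (hn : n = 2 * Module.finrank k H)
    {A : Type*} [Ring A] [HopfAlgebra k A]
    (σ : ZMod n → H →ₗ[k] A)
    (hσone : σ 0 1 = 1)
    (hσmul : ∀ (κ ι : ZMod n) (a b : H), σ κ a * σ ι b
      = σ (κ + ι) (a * (⇑(HopfAlgebra.antipode (R := k) (A := H)))^[2 * κ.val] b))
    (hσcomul : ∀ (κ : ZMod n) (h : H),
      Coalgebra.comul (R := k) (σ κ h) = TensorProduct.map (σ κ) (σ κ) (Coalgebra.comul (R := k) h))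
    (hσcounit : ∀ (κ : ZMod n) (h : H),
      Coalgebra.counit (R := k) (σ κ h) = Coalgebra.counit (R := k) h)
    (hσantipode : ∀ (κ : ZMod n) (h : H), HopfAlgebra.antipode (R := k) (σ κ h)
      = σ (-κ) ((⇑(HopfAlgebra.antipode (R := k) (A := H)))^[2 * n + 1 - 2 * κ.val] h))
    (hσspan : ∀ a : A, ∃ c : ZMod n → H, a = ∑ κ : ZMod n, σ κ (c κ))
    (hσindep : ∀ c : ZMod n → H, ∑ κ : ZMod n, σ κ (c κ) = 0 → ∀ κ, c κ = 0)
    (ζ : k) (hζ : IsPrimitiveRoot ζ n)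
    [Module.Finite k A]
    (lam' : A →ₗ[k] k)
    (hlam' : ∀ (κ : ZMod n) (h : H),
      lam' (σ κ h) = lam h * ∑ j ∈ Finset.range n, ζ ^ (j * κ.val))
    :
    (∀ z : A, (TensorProduct.lid k A)
      ((TensorProduct.map lam' LinearMap.id) (Coalgebra.comul (R := k) z)) = lam' z • (1 : A)) ∧
    lam' ((n : k)⁻¹ • ∑ κ : ZMod n, σ κ Λ) = 1 ∧
    uElt k A ((n : k)⁻¹ • ∑ κ : ZMod n, σ κ Λ) = σ 0 u ∧
    (∀ (κ : ZMod n) (h : H),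
      regChar k A (σ κ h) = regChar k H h * ∑ j ∈ Finset.range n, ζ ^ (j * κ.val)) ∧
    (∀ h : H, regChar k A (σ 0 h) = (n : k) * regChar k H h) ∧
    (∀ (κ : ZMod n), κ ≠ 0 → ∀ h : H, regChar k A (σ κ h) = 0) := by

  classical
  set S : H →ₗ[k] H := HopfAlgebra.antipode (R := k) (A := H) with hSdef
  have hn0 : n ≠ 0 := NeZero.ne n
  have hfr : 1 ≤ Module.finrank k H := by
    by_contra hcon
    have : Module.finrank k H = 0 := by omega
    rw [this] at hn; omega
  have hn2 : 2 ≤ n := by omega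
  have hnk : (n : k) ≠ 0 := by
    intro h0
    rw [CharP.cast_eq_zero_iff k p n, hn] at h0
    exact hpnd h0
  haveI : Fact (1 < n) := ⟨hn2⟩
  have hval1 : (1 : ZMod n).val = 1 := ZMod.val_one n
  have hvalneg1 : (-1 : ZMod n).val = n - 1 := by
    rw [ZMod.neg_val, if_neg, hval1]
    intro hcon
    rw [hcon, ZMod.val_zero] at hval1
    omega
  have e1 : 2 * (1 : ZMod n).val = 2 := by rw [hval1]
  -- injectivity of the sigma's
  have hσz : ∀ (κ : ZMod n) (x : H), σ κ x = 0 → x = 0 := by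
    intro κ x hx
    have hs : ∑ ι : ZMod n, σ ι (if ι = κ then x else 0) = 0 := by
      rw [Finset.sum_eq_single κ]
      · simpa using hx
      · intro b _ hb; simp [hb]
      · simp
    simpa using hσindep _ hs κ
  have hσinj : ∀ κ : ZMod n, Function.Injective (σ κ) := by
    intro κ x y hxy
    have := hσz κ (x - y) (by rw [map_sub, hxy, sub_self])
    exact sub_eq_zero.mp this
  -- basic antipode facts
  have hS1 : S 1 = 1 := by
    have h := HopfAlgebra.mul_antipode_rTensor_comul_apply (R := k) (A := H) 1
    rw [Bialgebra.comul_one, Algebra.TensorProduct.one_def] at h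
    exact HopfAlgebra.antipode_one (R := k) (A := H)
  have hSm1 : ∀ m : ℕ, (⇑S)^[m] (1 : H) = 1 := by
    intro m
    induction m with
    | zero => rfl
    | succ m ih => rw [Function.iterate_succ_apply', ih, hS1]
  have hTκ : ∀ (κ : ZMod n) (b : H), σ κ 1 * σ 0 b = σ κ ((⇑S)^[2 * κ.val] b) := by
    intro κ b
    rw [hσmul, add_zero, one_mul]
  have hmul00 : ∀ b c : H, σ 0 b * σ 0 c = σ 0 (b * c) := by
    intro b c
    rw [hσmul, add_zero]
    norm_num [ZMod.val_zero]
  have hE2mul : ∀ b c : H, (⇑S)^[2] (b * c) = (⇑S)^[2] b * (⇑S)^[2] c := by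
    intro b c
    apply hσinj 1
    calc σ 1 ((⇑S)^[2] (b * c)) = σ 1 1 * σ 0 (b * c) := by rw [hTκ, e1]
      _ = σ 1 1 * (σ 0 b * σ 0 c) := by rw [hmul00]
      _ = (σ 1 1 * σ 0 b) * σ 0 c := by rw [mul_assoc]
      _ = σ 1 ((⇑S)^[2] b) * σ 0 c := by rw [hTκ, e1]
      _ = σ (1 + 0) ((⇑S)^[2] b * (⇑S)^[2 * (1 : ZMod n).val] c) := hσmul _ _ _ _
      _ = σ 1 ((⇑S)^[2] b * (⇑S)^[2] c) := by rw [add_zero, e1]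
  have hEcounit : ∀ b : H, Coalgebra.counit (R := k) ((⇑S)^[2] b) = Coalgebra.counit (R := k) b := by
    intro b
    have h2 := hTκ 1 b
    rw [e1] at h2
    calc Coalgebra.counit (R := k) ((⇑S)^[2] b)
        = Coalgebra.counit (R := k) (σ 1 ((⇑S)^[2] b)) := (hσcounit _ _).symm
      _ = Coalgebra.counit (R := k) (σ 1 1 * σ 0 b) := by rw [h2]
      _ = Coalgebra.counit (R := k) (σ 1 1) * Coalgebra.counit (R := k) (σ 0 b) :=
          Bialgebra.counit_mul _ _
      _ = Coalgebra.counit (R := k) b := by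
          rw [hσcounit, hσcounit, Bialgebra.counit_one, one_mul]
  have hεiter : ∀ (m : ℕ) (b : H),
      Coalgebra.counit (R := k) ((⇑S)^[2 * m] b) = Coalgebra.counit (R := k) b := by
    intro m
    induction m with
    | zero => intro b; rfl
    | succ m ih =>
      intro b
      have hexp : 2 * (m + 1) = 2 * m + 2 := by ring
      rw [hexp, Function.iterate_add_apply, ih, hEcounit]
  set SS : H →ₗ[k] H := S ∘ₗ S with hSSdef
  have hSS : ∀ x : H, SS x = (⇑S)^[2] x := fun _ => rfl
  -- injectivity of map σ1 σ1 and comul-compatibility of S²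
  obtain ⟨r, hr⟩ := (σ 1).exists_leftInverse_of_injective (LinearMap.ker_eq_bot.mpr (hσinj 1))
  have hinj2 : Function.Injective (TensorProduct.map (σ 1) (σ 1)) := by
    have hx : ∀ z : H ⊗[k] H, TensorProduct.map r r (TensorProduct.map (σ 1) (σ 1) z) = z := by
      intro z
      rw [← LinearMap.comp_apply, ← TensorProduct.map_comp, hr, TensorProduct.map_id,
        LinearMap.id_apply]
    intro x y hxy
    rw [← hx x, hxy, hx]
  have haux2 : ∀ w : H ⊗[k] H,
      (σ 1 1 ⊗ₜ[k] σ 1 1) * TensorProduct.map (σ 0) (σ 0) w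
        = TensorProduct.map (σ 1) (σ 1) (TensorProduct.map SS SS w) := by
    intro w
    induction w using TensorProduct.induction_on with
    | zero => simp
    | tmul a b =>
      rw [map_tmul, map_tmul, map_tmul, Algebra.TensorProduct.tmul_mul_tmul]
      have ha := hTκ 1 a
      have hb := hTκ 1 b
      rw [e1] at ha hb
      rw [ha, hb]
      rfl
    | add x y hx hy =>
      rw [map_add, mul_add, hx, hy, map_add, map_add]
  have hEcomul : ∀ b : H, Coalgebra.comul (R := k) ((⇑S)^[2] b)
      = TensorProduct.map SS SS (Coalgebra.comul (R := k) b) := by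
    intro b
    apply hinj2
    have h2 := hTκ 1 b
    rw [e1] at h2
    rw [← hσcomul, ← h2, Bialgebra.comul_mul, hσcomul, hσcomul, Bialgebra.comul_one,
      Algebra.TensorProduct.one_def, map_tmul]
    exact haux2 _
  -- S^[2n] = id
  have hS2n : ∀ c : H, (⇑S)^[2 * n] c = c := by
    intro c
    apply hσinj 0
    have hA : σ (-1) 1 * (σ 1 1 * σ 0 c) = σ 0 ((⇑S)^[2 * n] c) := by
      calc σ (-1) 1 * (σ 1 1 * σ 0 c)
          = σ (-1) 1 * σ 1 ((⇑S)^[2] c) := by rw [hTκ 1 c, e1]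
        _ = σ ((-1) + 1) (1 * (⇑S)^[2 * (-1 : ZMod n).val] ((⇑S)^[2] c)) := hσmul _ _ _ _
        _ = σ 0 ((⇑S)^[2 * (n - 1) + 2] c) := by
            rw [neg_add_cancel, one_mul, hvalneg1, ← Function.iterate_add_apply]
        _ = σ 0 ((⇑S)^[2 * n] c) := by
            have hexp : 2 * (n - 1) + 2 = 2 * n := by omega
            rw [hexp]
    have hB : σ (-1) 1 * σ 1 1 = 1 := by
      rw [hσmul, hvalneg1, one_mul, neg_add_cancel, hSm1, hσone]
    rw [← hA, ← mul_assoc, hB, one_mul]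
  have hS2m_mul : ∀ (m : ℕ) (b c : H),
      (⇑S)^[2 * m] (b * c) = (⇑S)^[2 * m] b * (⇑S)^[2 * m] c := by
    intro m
    induction m with
    | zero => intro b c; rfl
    | succ m ih =>
      intro b c
      have hexp : 2 * (m + 1) = 2 * m + 2 := by ring
      rw [hexp, Function.iterate_add_apply, Function.iterate_add_apply,
        Function.iterate_add_apply, hE2mul, ih]
  -- the semisimplicity kill lemma
  have hkill : ∀ x : H, (∀ h : H, h * x = Coalgebra.counit (R := k) h • x) →
      Coalgebra.counit (R := k) x = (0 : k) → x = 0 := by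
    intro x hx hεx
    obtain ⟨J, hJ⟩ := exists_isCompl (Submodule.span H ({x} : Set H))
    have h1 : (1 : H) ∈ Submodule.span H ({x} : Set H) ⊔ J := by
      rw [hJ.sup_eq_top]; trivial
    obtain ⟨a, ha, b, hb, hab⟩ := Submodule.mem_sup.mp h1
    have hxx : x * x = 0 := by rw [hx x, hεx, zero_smul]
    have hP : ∀ y ∈ Submodule.span H ({x} : Set H), ∃ c : k, y = c • x := by
      intro y hy
      induction hy using Submodule.span_induction with
      | mem z hz =>
        exact ⟨1, by rw [one_smul, Set.eq_of_mem_singleton hz]⟩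
      | zero => exact ⟨0, by rw [zero_smul]⟩
      | add y z _ _ hy hz =>
        obtain ⟨c, rfl⟩ := hy
        obtain ⟨c', rfl⟩ := hz
        exact ⟨c + c', by rw [add_smul]⟩
      | smul a y _ hy =>
        obtain ⟨c, rfl⟩ := hy
        refine ⟨c * Coalgebra.counit (R := k) a, ?_⟩
        rw [smul_eq_mul, mul_smul_comm, hx, smul_smul]
    obtain ⟨c, hc⟩ := hP a ha
    have hxa : x * a = 0 := by rw [hc, mul_smul_comm, hxx, smul_zero]
    have hxb : x = x * b := by
      calc x = x * 1 := (mul_one x).symm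
        _ = x * (a + b) := by rw [hab]
        _ = x * a + x * b := mul_add _ _ _
        _ = x * b := by rw [hxa, zero_add]
    have hxJ : x ∈ J := by
      rw [hxb, ← smul_eq_mul]
      exact J.smul_mem x hb
    have hxmem : x ∈ Submodule.span H ({x} : Set H) ⊓ J :=
      ⟨Submodule.mem_span_singleton_self x, hxJ⟩
    rw [hJ.inf_eq_bot] at hxmem
    simpa using hxmem
  -- S² fixes Λ
  have hiterlin : ∀ (m : ℕ) (c : k) (x : H), (⇑S)^[m] (c • x) = c • (⇑S)^[m] x := by
    intro m
    induction m with
    | zero => intro c x; rfl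
    | succ m ih =>
      intro c x
      rw [Function.iterate_succ_apply', Function.iterate_succ_apply', ih, map_smul]
  have hEint : ∀ h : H, h * (⇑S)^[2] Λ = Coalgebra.counit (R := k) h • (⇑S)^[2] Λ := by
    intro h
    have hh : h = (⇑S)^[2] ((⇑S)^[2 * (n - 1)] h) := by
      rw [← Function.iterate_add_apply]
      have hexp : 2 + 2 * (n - 1) = 2 * n := by omega
      rw [hexp]
      exact (hS2n h).symm
    conv_lhs => rw [hh]
    rw [← hE2mul, hΛ, hiterlin]
    have := hεiter (n - 1) h
    rw [this]
  have hEΛ : (⇑S)^[2] Λ = Λ := by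
    have h0 : ∀ h : H, h * ((⇑S)^[2] Λ - Λ) =
        Coalgebra.counit (R := k) h • ((⇑S)^[2] Λ - Λ) := by
      intro h
      rw [mul_sub, smul_sub, hEint, hΛ]
    have h1 : Coalgebra.counit (R := k) ((⇑S)^[2] Λ - Λ) = 0 := by
      rw [map_sub, hEcounit, sub_self]
    have := hkill _ h0 h1
    exact sub_eq_zero.mp this
  -- S² fixes u
  have hiteradd : ∀ (m : ℕ) (x y : H), (⇑S)^[m] (x + y) = (⇑S)^[m] x + (⇑S)^[m] y := by
    intro m
    induction m with
    | zero => intro x y; rfl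
    | succ m ih =>
      intro x y
      rw [Function.iterate_succ_apply', Function.iterate_succ_apply',
        Function.iterate_succ_apply', ih, map_add]
  have hEuaux : ∀ w : H ⊗[k] H,
      (⇑S)^[2] (LinearMap.mul' k H (TensorProduct.map S LinearMap.id
        ((TensorProduct.comm k H H) w)))
      = LinearMap.mul' k H (TensorProduct.map S LinearMap.id
        ((TensorProduct.comm k H H) (TensorProduct.map SS SS w))) := by
    intro w
    induction w using TensorProduct.induction_on with
    | zero => simp [hSS]
    | tmul a b =>
      simp only [TensorProduct.comm_tmul, map_tmul, LinearMap.mul'_apply, LinearMap.id_coe,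
        id_eq]
      rw [hE2mul]
      rfl
    | add x y hx hy =>
      simp only [map_add, hiteradd, hx, hy]
  have hwinv : TensorProduct.map SS SS (Coalgebra.comul (R := k) Λ)
      = Coalgebra.comul (R := k) Λ := by
    rw [← hEcomul, hEΛ]
  have hEu : (⇑S)^[2] u = u := by
    rw [hu]
    unfold uElt
    conv_rhs => rw [← hwinv]
    exact hEuaux _
  have hS2mu : ∀ m : ℕ, (⇑S)^[2 * m] u = u := by
    intro m
    induction m with
    | zero => rfl
    | succ m ih =>
      have hexp : 2 * (m + 1) = 2 * m + 2 := by ring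
      rw [hexp, Function.iterate_add_apply, hEu, ih]
  -- exponent bookkeeping for the antipode of A
  have hanti : ∀ (κ : ZMod n) (b : H),
      (⇑S)^[2 * n + 1 - 2 * κ.val] b = (⇑S)^[2 * (-κ).val] (S b) := by
    intro κ b
    by_cases hκ : κ = 0
    · subst hκ
      simp only [neg_zero, ZMod.val_zero, mul_zero, Nat.sub_zero, Function.iterate_zero, id_eq]
      have hexp : 2 * n + 1 = 1 + 2 * n := by omega
      rw [hexp, Function.iterate_add_apply, hS2n, Function.iterate_one]
    · rw [ZMod.neg_val, if_neg hκ]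
      have hlt := ZMod.val_lt κ
      have hexp : 2 * n + 1 - 2 * κ.val = 2 * (n - κ.val) + 1 := by omega
      rw [hexp, Function.iterate_succ_apply]
  -- key geometric sum
  have keyc : ∀ κ : ZMod n,
      (∑ j ∈ Finset.range n, ζ ^ (j * κ.val)) = if κ = 0 then (n : k) else 0 := by
    intro κ
    by_cases hκ : κ = 0
    · subst hκ
      simp [ZMod.val_zero]
    · rw [if_neg hκ]
      have hvne : κ.val ≠ 0 := fun hcon => hκ ((ZMod.val_eq_zero κ).mp hcon)
      have hne : ζ ^ κ.val ≠ 1 :=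
        hζ.pow_ne_one_of_pos_of_lt hvne (ZMod.val_lt κ)
      calc ∑ j ∈ Finset.range n, ζ ^ (j * κ.val)
          = ∑ j ∈ Finset.range n, (ζ ^ κ.val) ^ j := by
            refine Finset.sum_congr rfl fun j _ => ?_
            rw [← pow_mul, mul_comm]
        _ = ((ζ ^ κ.val) ^ n - 1) / (ζ ^ κ.val - 1) := geom_sum_eq hne n
        _ = 0 := by
            rw [← pow_mul, mul_comm κ.val n, pow_mul, hζ.pow_eq_one, one_pow, sub_self,
              zero_div]
  -- Conjunct 1 : lam' is a right integral
  have haux1 : ∀ (κ : ZMod n) (w : H ⊗[k] H),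
      (TensorProduct.lid k A) (TensorProduct.map lam' LinearMap.id
        (TensorProduct.map (σ κ) (σ κ) w))
      = (∑ j ∈ Finset.range n, ζ ^ (j * κ.val)) •
          σ κ ((TensorProduct.lid k H) (TensorProduct.map lam LinearMap.id w)) := by
    intro κ w
    induction w using TensorProduct.induction_on with
    | zero => simp
    | tmul a b =>
      simp only [map_tmul, LinearMap.id_coe, id_eq, TensorProduct.lid_tmul]
      rw [hlam', map_smul, smul_smul, mul_comm]
    | add x y hx hy =>
      simp only [map_add, hx, hy, smul_add]
  have hgoal1 : ∀ z : A, (TensorProduct.lid k A)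
      ((TensorProduct.map lam' LinearMap.id) (Coalgebra.comul (R := k) z))
      = lam' z • (1 : A) := by
    intro z
    obtain ⟨c, rfl⟩ := hσspan z
    simp only [map_sum]
    rw [Finset.sum_smul]
    refine Finset.sum_congr rfl fun κ _ => ?_
    rw [hσcomul, haux1, hlamInt, hlam']
    by_cases hκ : κ = 0
    · subst hκ
      rw [map_smul, hσone, smul_smul, mul_comm]
    · rw [keyc, if_neg hκ, zero_smul, mul_zero, zero_smul]
  -- Conjunct 2
  have hc2 : lam' ((n : k)⁻¹ • ∑ κ : ZMod n, σ κ Λ) = 1 := by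
    rw [map_smul, map_sum]
    simp only [hlam', hlamΛ, one_mul, keyc]
    rw [Finset.sum_ite_eq' Finset.univ (0 : ZMod n) fun _ => (n : k)]
    simp [inv_mul_cancel₀ hnk]
  -- Conjunct 3
  have hiterzero : ∀ m : ℕ, (⇑S)^[m] (0 : H) = 0 := by
    intro m
    induction m with
    | zero => rfl
    | succ m ih => rw [Function.iterate_succ_apply', ih, map_zero]
  have haux3 : ∀ (κ : ZMod n) (w : H ⊗[k] H),
      LinearMap.mul' k A (TensorProduct.map (HopfAlgebra.antipode (R := k) (A := A))
        LinearMap.id ((TensorProduct.comm k A A) (TensorProduct.map (σ κ) (σ κ) w)))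
      = σ 0 ((⇑S)^[2 * (-κ).val] (LinearMap.mul' k H (TensorProduct.map S LinearMap.id
          ((TensorProduct.comm k H H) w)))) := by
    intro κ w
    induction w using TensorProduct.induction_on with
    | zero => simp only [map_zero, hiterzero]
    | tmul a b =>
      simp only [TensorProduct.comm_tmul, map_tmul, LinearMap.mul'_apply, LinearMap.id_coe,
        id_eq]
      rw [hσantipode, hσmul, neg_add_cancel, hanti, ← hS2m_mul]
    | add x y hx hy =>
      simp only [map_add, hiteradd, hx, hy]
  have huX : LinearMap.mul' k H (TensorProduct.map S LinearMap.id
      ((TensorProduct.comm k H H) (Coalgebra.comul (R := k) Λ))) = u := by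
    rw [hu]; rfl
  have hc3 : uElt k A ((n : k)⁻¹ • ∑ κ : ZMod n, σ κ Λ) = σ 0 u := by
    unfold uElt
    simp only [map_smul, map_sum]
    simp only [hσcomul, haux3, huX, hS2mu]
    rw [Finset.sum_const, Finset.card_univ, ZMod.card, ← Nat.cast_smul_eq_nsmul k, smul_smul,
      inv_mul_cancel₀ hnk, one_smul]
  -- Conjunct 4 : characters
  have hc4 : ∀ (κ : ZMod n) (h : H),
      regChar k A (σ κ h) = regChar k H h * ∑ j ∈ Finset.range n, ζ ^ (j * κ.val) := by
    have hlsum : ∀ c : ZMod n → H,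
        ((LinearMap.lsum k (fun _ : ZMod n => H) k) σ) c = ∑ κ : ZMod n, σ κ (c κ) := by
      intro c
      rw [LinearMap.lsum_apply]
      simp [LinearMap.sum_apply, LinearMap.comp_apply, LinearMap.proj_apply]
    obtain ⟨e, he⟩ : ∃ e : (ZMod n → H) ≃ₗ[k] A, ∀ c : ZMod n → H,
        e c = ∑ κ : ZMod n, σ κ (c κ) := by
      refine ⟨LinearEquiv.ofBijective ((LinearMap.lsum k (fun _ : ZMod n => H) k) σ)
        ⟨?_, ?_⟩, fun c => hlsum c⟩
      · intro c c' hcc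
        funext κ
        have hz : ∑ ι : ZMod n, σ ι ((c - c') ι) = 0 := by
          have : ∀ ι : ZMod n, σ ι ((c - c') ι) = σ ι (c ι) - σ ι (c' ι) := by
            intro ι; rw [Pi.sub_apply, map_sub]
          rw [Finset.sum_congr rfl fun ι _ => this ι, Finset.sum_sub_distrib,
            ← hlsum, ← hlsum, hcc, sub_self]
        have := hσindep _ hz κ
        rw [Pi.sub_apply] at this
        exact sub_eq_zero.mp this
      · intro a
        obtain ⟨c, hc⟩ := hσspan a
        exact ⟨c, by rw [hlsum]; exact hc.symm⟩
    intro κ h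
    set B := Module.finBasis k H with hB
    set F : (ZMod n → H) →ₗ[k] (ZMod n → H) :=
      LinearMap.pi (fun j : ZMod n =>
        LinearMap.mulLeft k h ∘ₗ (S ^ (2 * κ.val)) ∘ₗ LinearMap.proj (j - κ)) with hF
    have hFdef : ∀ (c : ZMod n → H) (j : ZMod n),
        F c j = h * (S ^ (2 * κ.val)) (c (j - κ)) := by
      intro c j
      rw [hF, LinearMap.pi_apply, LinearMap.comp_apply, LinearMap.comp_apply,
        LinearMap.mulLeft_apply, LinearMap.proj_apply]
    have hconj : e.symm.conj (LinearMap.mul k A (σ κ h)) = F := by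
      apply LinearMap.ext; intro c
      apply e.injective
      rw [LinearEquiv.conj_apply, LinearMap.comp_apply, LinearMap.comp_apply,
        LinearEquiv.coe_coe, LinearEquiv.coe_coe, LinearEquiv.symm_symm,
        LinearEquiv.apply_symm_apply]
      rw [he, he, LinearMap.mul_apply', Finset.mul_sum]
      refine Fintype.sum_equiv (Equiv.addLeft κ) _ _ fun ι => ?_
      rw [hσmul, hFdef, Equiv.coe_addLeft, add_sub_cancel_left, Module.End.pow_apply]
    have htr : regChar k A (σ κ h) = LinearMap.trace k (ZMod n → H) F := by
      have : regChar k A (σ κ h) = LinearMap.trace k A (LinearMap.mul k A (σ κ h)) := rfl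
      rw [this, ← hconj, LinearMap.trace_conj']
    have hT : regChar k H h = ∑ i, B.repr (h * B i) i := by
      have h1 : regChar k H h = LinearMap.trace k H (LinearMap.mul k H h) := rfl
      have h2 : (LinearMap.toMatrix B B (LinearMap.mul k H h)).trace
          = ∑ i, (LinearMap.toMatrix B B (LinearMap.mul k H h)) i i := rfl
      rw [h1, LinearMap.trace_eq_matrix_trace k B, h2]
      refine Finset.sum_congr rfl fun i _ => ?_
      rw [LinearMap.toMatrix_apply, LinearMap.mul_apply']
    rw [htr, LinearMap.trace_eq_matrix_trace k (Pi.basis fun _ : ZMod n => B) F]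
    have hentry : ∀ ji : Σ _ : ZMod n, Fin (Module.finrank k H),
        (LinearMap.toMatrix (Pi.basis fun _ : ZMod n => B)
          (Pi.basis fun _ : ZMod n => B) F) ji ji
          = if κ = 0 then B.repr (h * B ji.2) ji.2 else 0 := by
      intro ji
      rw [LinearMap.toMatrix_apply, Pi.basis_repr, hFdef, Pi.basis_apply]
      by_cases hκ : κ = 0
      · subst hκ
        rw [if_pos rfl, sub_zero, Pi.single_eq_same]
        simp [ZMod.val_zero]
      · rw [if_neg hκ]
        have hne : ji.1 - κ ≠ ji.1 := fun hcon => hκ (by rwa [sub_eq_self] at hcon)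
        rw [Pi.single_eq_of_ne hne, map_zero, mul_zero, map_zero]
        rfl
    have htrace : ((LinearMap.toMatrix (Pi.basis fun _ : ZMod n => B)
        (Pi.basis fun _ : ZMod n => B) F)).trace
        = ∑ ji : Σ _ : ZMod n, Fin (Module.finrank k H),
            (LinearMap.toMatrix (Pi.basis fun _ : ZMod n => B)
              (Pi.basis fun _ : ZMod n => B) F) ji ji := rfl
    rw [htrace, Finset.sum_congr rfl fun ji _ => hentry ji]
    by_cases hκ : κ = 0
    · subst hκ
      rw [keyc, if_pos rfl]
      have hsum : (∑ ji : Σ _ : ZMod n, Fin (Module.finrank k H),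
          if (0 : ZMod n) = 0 then B.repr (h * B ji.2) ji.2 else 0)
          = ∑ _j : ZMod n, ∑ i : Fin (Module.finrank k H), B.repr (h * B i) i := by
        rw [← Finset.univ_sigma_univ, Finset.sum_sigma]
        simp
      rw [hsum, Finset.sum_const, Finset.card_univ, ZMod.card, hT, nsmul_eq_mul, mul_comm]
    · rw [keyc, if_neg hκ, mul_zero]
      simp [if_neg hκ]
  refine ⟨hgoal1, hc2, hc3, hc4, fun h => ?_, fun κ hκ h => ?_⟩
  · rw [hc4 0 h, keyc, if_pos rfl, mul_comm]
  · rw [hc4 κ h, keyc, if_neg hκ, mul_zero]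

end
end
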